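/- Let N ≥ 1 and ρ > 0. For each i = 1,…,N let X_i ⊆ ℝ^{n_i} be a convex set, f_i : ℝ^{n_i} → ℝ a convex function, Ē_i a real n_i × p matrix, and λ_i ∈ ℝ^{n_i}. Suppose (x₁*,…,x_N*, z*) satisfies the ADMM fixed-point conditions: (i) for each i, x_i* ∈ X_i minimizes x ↦ f_i(x) + ⟨λ_i, x − Ē_i z*⟩ + (ρ/2)‖x − Ē_i z*‖₂² over X_i; (ii) z* minimizes z ↦ Σ_i ( ⟨λ_i, x_i* − Ē_i z⟩ + (ρ/2)‖x_i* − Ē_i z‖₂² ) over ℝ^p; and (iii) x_i* = Ē_i z* for all i (consistency). Then (x₁*,…,x_N*) is optimal for the consensus problem: for every z ∈ ℝ^p with Ē_i z ∈ X_i for all i, one has Σ_{i=1}^N f_i(x_i*) ≤ Σ_{i=1}^N f_i(Ē_i z). -/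

import Mathlib

/-!
At a fixed point the residuals `xᵢ* - Ēᵢ z*` vanish, so along every segment issuing from the
fixed point the quadratic penalty is of second order and drops out of the first-order optimality
conditions. Together with convexity, the `x`-step then yields
`fᵢ(xᵢ*) ≤ fᵢ(xᵢ) + λᵢᵀ (xᵢ - xᵢ*)` for every `xᵢ ∈ Xᵢ`, and the `z`-step yields
`Σᵢ λᵢᵀ Ēᵢ (z - z*) ≤ 0`. Summing the first inequality at `xᵢ = Ēᵢ z` and using the second
gives the claim.
-/

open Matrix Finset

open Filter Topology in
theorem nonneg_of_forall_mul_add_sq_mul_nonneg {α β : ℝ}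
    (h : ∀ t : ℝ, 0 < t → t ≤ 1 → 0 ≤ t * α + t ^ 2 * β) : 0 ≤ α := by
  have hlim : Tendsto (fun t : ℝ => α + t * β) (𝓝[>] 0) (𝓝 α) :=
    ((continuous_const.add (continuous_id.mul continuous_const)).tendsto' 0 α
      (by simp)).mono_left nhdsWithin_le_nhds
  refine ge_of_tendsto hlim ?_
  filter_upwards [Ioc_mem_nhdsGT one_pos] with t ⟨ht0, ht1⟩
  refine nonneg_of_mul_nonneg_right ?_ ht0
  linear_combination h t ht0 ht1

/-- `hg` says that `g` is quadratic along rays from `a`, with slope `ℓ`; its second-order part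
drops out of the first-order optimality condition. -/
theorem ConvexOn.le_add_of_isMinOn_add_quadratic {E : Type*} [AddCommGroup E] [Module ℝ E]
    {s : Set E} {f g ℓ q : E → ℝ} (hf : ConvexOn ℝ s f) {a x : E} (ha : a ∈ s) (hx : x ∈ s)
    (hg : ∀ (t : ℝ) (v : E), g (a + t • v) = g a + t * ℓ v + t ^ 2 * q v)
    (hmin : IsMinOn (f + g) s a) :
    f a ≤ f x + ℓ (x - a) := by
  suffices 0 ≤ f x - f a + ℓ (x - a) by linarith
  refine nonneg_of_forall_mul_add_sq_mul_nonneg (β := q (x - a)) fun t ht0 ht1 => ?_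
  have hmem : a + t • (x - a) ∈ s := hf.1.add_smul_sub_mem ha hx ⟨ht0.le, ht1⟩
  have hconv : f (a + t • (x - a)) ≤ (1 - t) * f a + t * f x := by
    have hseg : a + t • (x - a) = (1 - t) • a + t • x := by module
    rw [hseg]
    exact hf.2 ha hx (by linarith) ht0.le (by ring)
  have hle := isMinOn_iff.1 hmin _ hmem
  simp only [Pi.add_apply, hg] at hle
  linarith

theorem ConvexOn.le_add_dotProduct_of_isMinOn_add_penalty {ι : Type*} [Fintype ι]
    {s : Set (ι → ℝ)} {f : (ι → ℝ) → ℝ} (hf : ConvexOn ℝ s f) (ρ : ℝ) (lam : ι → ℝ)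
    {a x : ι → ℝ} (ha : a ∈ s) (hx : x ∈ s)
    (hmin : IsMinOn (fun y => f y + lam ⬝ᵥ (y - a) + ρ / 2 * ∑ j, (y j - a j) ^ 2) s a) :
    f a ≤ f x + lam ⬝ᵥ (x - a) :=
  hf.le_add_of_isMinOn_add_quadratic (q := fun v => ρ / 2 * ∑ j, v j ^ 2) ha hx
    (g := fun y => lam ⬝ᵥ (y - a) + ρ / 2 * ∑ j, (y j - a j) ^ 2)
    (fun t v => by simp [mul_pow, mul_sum, mul_left_comm])
    (isMinOn_iff.2 fun y hy => by simpa [add_assoc] using isMinOn_iff.1 hmin y hy)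

theorem sum_dotProduct_mulVec_sub_nonneg_of_isMinOn {κ P : Type*} [Fintype κ] [Fintype P]
    {m : κ → Type*} [∀ i, Fintype (m i)] (ρ : ℝ) (E : ∀ i, Matrix (m i) P ℝ)
    (lam : ∀ i, m i → ℝ) {a : P → ℝ}
    (hmin : IsMinOn (fun z => ∑ i, (lam i ⬝ᵥ (E i *ᵥ a - E i *ᵥ z)
        + ρ / 2 * ∑ j, ((E i *ᵥ a) j - (E i *ᵥ z) j) ^ 2)) Set.univ a) (z : P → ℝ) :
    0 ≤ ∑ i, lam i ⬝ᵥ (E i *ᵥ a - E i *ᵥ z) := by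
  have := (convexOn_const (0 : ℝ) convex_univ).le_add_of_isMinOn_add_quadratic
    (Set.mem_univ a) (Set.mem_univ z) (ℓ := fun v => -∑ i, lam i ⬝ᵥ (E i *ᵥ v))
    (q := fun v => ρ / 2 * ∑ i, ∑ j, (E i *ᵥ v) j ^ 2)
    (g := fun z => ∑ i, (lam i ⬝ᵥ (E i *ᵥ a - E i *ᵥ z)
        + ρ / 2 * ∑ j, ((E i *ᵥ a) j - (E i *ᵥ z) j) ^ 2))
    (fun t v => by
      simp [mulVec_add, mulVec_smul, mul_pow, mul_sum, sum_add_distrib, mul_left_comm])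
    (by simpa only [Pi.add_def, zero_add] using hmin)
  simpa [mulVec_sub] using this

theorem admm_fixed_point_is_consensus_optimal_general
    (N p : ℕ) (ρ : ℝ) (n : Fin N → ℕ)
    (X : ∀ i, Set (Fin (n i) → ℝ)) (hXconv : ∀ i, Convex ℝ (X i))
    (f : ∀ i, (Fin (n i) → ℝ) → ℝ)
    (hfconv : ∀ i, ConvexOn ℝ Set.univ (f i))
    (E : ∀ i, Matrix (Fin (n i)) (Fin p) ℝ)
    (lam : ∀ i, Fin (n i) → ℝ)
    (xstar : ∀ i, Fin (n i) → ℝ) (zstar : Fin p → ℝ)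
    -- (i) each `xᵢ*` minimizes the local augmented Lagrangian over `Xᵢ`
    (hxmem : ∀ i, xstar i ∈ X i)
    (hxmin : ∀ i, ∀ x ∈ X i,
      f i (xstar i) + lam i ⬝ᵥ (xstar i - E i *ᵥ zstar)
          + ρ / 2 * ∑ j, (xstar i j - (E i *ᵥ zstar) j) ^ 2 ≤
        f i x + lam i ⬝ᵥ (x - E i *ᵥ zstar)
          + ρ / 2 * ∑ j, (x j - (E i *ᵥ zstar) j) ^ 2)
    -- (ii) `z*` minimizes the z-part of the augmented Lagrangian over `ℝᵖ`
    (hzmin : ∀ z : Fin p → ℝ,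
      ∑ i, (lam i ⬝ᵥ (xstar i - E i *ᵥ zstar)
          + ρ / 2 * ∑ j, (xstar i j - (E i *ᵥ zstar) j) ^ 2) ≤
        ∑ i, (lam i ⬝ᵥ (xstar i - E i *ᵥ z)
          + ρ / 2 * ∑ j, (xstar i j - (E i *ᵥ z) j) ^ 2))
    -- (iii) consistency
    (hcons : ∀ i, xstar i = E i *ᵥ zstar) :
    ∀ z : Fin p → ℝ, (∀ i, E i *ᵥ z ∈ X i) →
      ∑ i, f i (xstar i) ≤ ∑ i, f i (E i *ᵥ z) := by
  intro z hz
  have hlocal : ∀ i, f i (xstar i) ≤ f i (E i *ᵥ z) + lam i ⬝ᵥ (E i *ᵥ z - xstar i) := fun i =>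
    ((hfconv i).subset (Set.subset_univ _) (hXconv i)).le_add_dotProduct_of_isMinOn_add_penalty
      ρ (lam i) (hxmem i) (hz i)
      (isMinOn_iff.2 fun y hy => by simpa only [← hcons i] using hxmin i y hy)
  have hdual : 0 ≤ ∑ i, lam i ⬝ᵥ (xstar i - E i *ᵥ z) := by
    simp only [hcons] at hzmin ⊢
    exact sum_dotProduct_mulVec_sub_nonneg_of_isMinOn ρ E lam (isMinOn_univ_iff.2 hzmin) z
  calc ∑ i, f i (xstar i)
      ≤ ∑ i, (f i (E i *ᵥ z) + lam i ⬝ᵥ (E i *ᵥ z - xstar i)) := sum_le_sum fun i _ => hlocal i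
    _ = ∑ i, f i (E i *ᵥ z) - ∑ i, lam i ⬝ᵥ (xstar i - E i *ᵥ z) := by
      simp [sum_add_distrib, sub_eq_add_neg, ← sum_neg_distrib, ← dotProduct_neg]
    _ ≤ ∑ i, f i (E i *ᵥ z) := sub_le_self _ hdual

/-- A fixed point of the ADMM iteration for the general-form global consensus
problem is a global minimizer of the consensus problem. -/
theorem admm_fixed_point_is_consensus_optimal
    (N p : ℕ) (hN : 1 ≤ N) (ρ : ℝ) (hρ : 0 < ρ) (n : Fin N → ℕ)
    (X : ∀ i, Set (Fin (n i) → ℝ)) (hXconv : ∀ i, Convex ℝ (X i))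
    (f : ∀ i, (Fin (n i) → ℝ) → ℝ)
    (hfconv : ∀ i, ConvexOn ℝ Set.univ (f i))
    (E : ∀ i, Matrix (Fin (n i)) (Fin p) ℝ)
    (lam : ∀ i, Fin (n i) → ℝ)
    (xstar : ∀ i, Fin (n i) → ℝ) (zstar : Fin p → ℝ)
    -- (i) each `xᵢ*` minimizes the local augmented Lagrangian over `Xᵢ`
    (hxmem : ∀ i, xstar i ∈ X i)
    (hxmin : ∀ i, ∀ x ∈ X i,
      f i (xstar i) + lam i ⬝ᵥ (xstar i - E i *ᵥ zstar)
          + ρ / 2 * ∑ j, (xstar i j - (E i *ᵥ zstar) j) ^ 2 ≤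
        f i x + lam i ⬝ᵥ (x - E i *ᵥ zstar)
          + ρ / 2 * ∑ j, (x j - (E i *ᵥ zstar) j) ^ 2)
    -- (ii) `z*` minimizes the z-part of the augmented Lagrangian over `ℝᵖ`
    (hzmin : ∀ z : Fin p → ℝ,
      ∑ i, (lam i ⬝ᵥ (xstar i - E i *ᵥ zstar)
          + ρ / 2 * ∑ j, (xstar i j - (E i *ᵥ zstar) j) ^ 2) ≤
        ∑ i, (lam i ⬝ᵥ (xstar i - E i *ᵥ z)
          + ρ / 2 * ∑ j, (xstar i j - (E i *ᵥ z) j) ^ 2))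
    -- (iii) consistency
    (hcons : ∀ i, xstar i = E i *ᵥ zstar) :
    ∀ z : Fin p → ℝ, (∀ i, E i *ᵥ z ∈ X i) →
      ∑ i, f i (xstar i) ≤ ∑ i, f i (E i *ᵥ z) :=
  admm_fixed_point_is_consensus_optimal_general N p ρ n X hXconv f hfconv E lam xstar zstar hxmem
    hxmin hzmin hcons
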